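/- arXiv:1304.4565 — 3 statements merged into one kernel-verified Lean document; each statement's English description precedes it below -/
import Mathlib

section
/- Suppose M : [0,∞) → [0,∞) is continuous with M(t) ≥ m₀ > 0 for all t ≥ 0 and t ↦ M(t)/t decreasing on (0,∞), and let θ > 4. Then for all t > 0, (1/t)·[(1/2)M̂(t) − (1/θ)M(t)·t] ≥ ((θ−4)/(4θ))·m₀, where M̂(t) = ∫₀ᵗ M(s) ds. -/
/-!
Since `M s / s` decreases, `M s ≥ s · M t / t` on `(0, t)`, so `M̂ t ≥ t · M t / 2`. Hence the
bracket is at least `t · M t · (1/4 − 1/θ)`, and `M t ≥ m₀` finishes.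
-/

open Set

lemma mul_div_le_of_antitoneOn_div {M : ℝ → ℝ} (hMdec : AntitoneOn (fun t => M t / t) (Ioi 0))
    {s t : ℝ} (hs : 0 < s) (hst : s ≤ t) : s * (M t / t) ≤ M s :=
  calc s * (M t / t) ≤ s * (M s / s) :=
        mul_le_mul_of_nonneg_left (hMdec hs (hs.trans_le hst) hst) hs.le
    _ = M s := mul_div_cancel₀ _ hs.ne'

lemma mul_div_two_le_integral_of_antitoneOn_div {M : ℝ → ℝ}
    (hMdec : AntitoneOn (fun t => M t / t) (Ioi 0)) {t : ℝ} (ht : 0 ≤ t)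
    (hM : IntervalIntegrable M MeasureTheory.volume 0 t) :
    t * M t / 2 ≤ ∫ s in (0 : ℝ)..t, M s := by
  have hlin : ∫ s in (0 : ℝ)..t, s * (M t / t) = t * M t / 2 := by
    rw [intervalIntegral.integral_mul_const, integral_id]
    rcases ht.eq_or_lt with rfl | ht
    · simp
    · field_simp
      ring
  rw [← hlin]
  exact intervalIntegral.integral_mono_on_of_le_Ioo ht
    ((continuous_id.mul continuous_const).intervalIntegrable 0 t) hM
    fun s hs => mul_div_le_of_antitoneOn_div hMdec hs.1 hs.2.le

theorem stmt2_general (M : ℝ → ℝ) (m₀ θ : ℝ)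
    (hMc : ContinuousOn M (Ici 0))
    (hM1 : ∀ t, 0 ≤ t → m₀ ≤ M t)
    (hMdec : AntitoneOn (fun t => M t / t) (Ioi 0))
    (hθ : 4 < θ) :
    ∀ t, 0 < t →
      ((θ - 4) / (4 * θ)) * m₀ ≤
        (1 / t) * ((1 / 2) * (∫ s in (0 : ℝ)..t, M s) - (1 / θ) * (M t * t)) := by
  intro t ht
  have hθ0 : 0 < θ := by linarith
  have hInt : IntervalIntegrable M MeasureTheory.volume 0 t :=
    (hMc.mono fun _ hs => by rw [uIcc_of_le ht.le] at hs; exact hs.1).intervalIntegrable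
  have hIntLower := mul_div_two_le_integral_of_antitoneOn_div hMdec ht.le hInt
  calc ((θ - 4) / (4 * θ)) * m₀ ≤ ((θ - 4) / (4 * θ)) * M t :=
        mul_le_mul_of_nonneg_left (hM1 t ht.le) (div_nonneg (by linarith) (by positivity))
    _ = (1 / t) * ((1 / 2) * (t * M t / 2) - (1 / θ) * (M t * t)) := by
        field_simp
        ring
    _ ≤ (1 / t) * ((1 / 2) * (∫ s in (0 : ℝ)..t, M s) - (1 / θ) * (M t * t)) := by
        gcongr

/-- If `M : [0,∞) → [0,∞)` is continuous, `M ≥ m₀ > 0`, `t ↦ M t / t` is decreasing on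
`(0,∞)` and `θ > 4`, then for all `t > 0`,
`(1/t) [ (1/2) M̂ t − (1/θ) M t * t ] ≥ ((θ−4)/(4θ)) m₀`, where `M̂ t = ∫₀ᵗ M`. -/
theorem stmt2 (M : ℝ → ℝ) (m₀ θ : ℝ) (hm₀ : 0 < m₀)
    (hMc : ContinuousOn M (Ici 0))
    (hM1 : ∀ t, 0 ≤ t → m₀ ≤ M t)
    (hMdec : AntitoneOn (fun t => M t / t) (Ioi 0))
    (hθ : 4 < θ) :
    ∀ t, 0 < t →
      ((θ - 4) / (4 * θ)) * m₀ ≤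
        (1 / t) * ((1 / 2) * (∫ s in (0 : ℝ)..t, M s) - (1 / θ) * (M t * t)) :=
  stmt2_general M m₀ θ hMc hM1 hMdec hθ
end

section
/- Let H be a real Hilbert space, M : [0,∞) → [0,∞) continuous with M ≥ m₀ > 0 and t ↦ M(t)/t decreasing, M̂ its primitive, θ ∈ (4,6), and suppose the functional I(u) = (1/2)M̂(‖u‖²) − Φ(u) satisfies Φ'(u)u ≥ θΦ(u) ≥ 0 for all u. If (uₙ) is a Palais–Smale sequence for I (I(uₙ) bounded and I'(uₙ) → 0), then (uₙ) is bounded in H. -/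
open Set Filter

/-- Boundedness of Palais–Smale sequences: `H` a real Hilbert space, `M` continuous
with `M ≥ m₀ > 0` and `t ↦ M t / t` decreasing on `(0,∞)`, `θ ∈ (4,6)`,
`Φ : H → ℝ` a `C¹` functional with `0 ≤ θ Φ(u) ≤ Φ'(u)u`, and
`I(u) = (1/2) M̂(‖u‖²) − Φ(u)` whose derivative is
`I'(u) = M(‖u‖²)⟪u,·⟫ − Φ'(u)`.  If `(uₙ)` is a Palais–Smale sequence for `I`
(`I(uₙ)` bounded and `I'(uₙ) → 0`), then `(uₙ)` is bounded in `H`. -/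
theorem stmt10 {H : Type*} [NormedAddCommGroup H] [InnerProductSpace ℝ H]
    (M : ℝ → ℝ) (m₀ θ : ℝ) (hm₀ : 0 < m₀)
    (hMc : ContinuousOn M (Ici 0))
    (hM1 : ∀ t, 0 ≤ t → m₀ ≤ M t)
    (hM3 : AntitoneOn (fun t => M t / t) (Ioi 0))
    (hθ : θ ∈ Ioo (4 : ℝ) 6)
    (Φ : H → ℝ) (Φ' : H → H →L[ℝ] ℝ) (hΦ : ∀ u, HasFDerivAt Φ (Φ' u) u)
    (hAR : ∀ u : H, 0 ≤ θ * Φ u ∧ θ * Φ u ≤ Φ' u u)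
    (I : H → ℝ)
    (hIdef : ∀ u : H, I u = (1 / 2) * (∫ s in (0 : ℝ)..(‖u‖ ^ 2), M s) - Φ u)
    (I' : H → H →L[ℝ] ℝ)
    (hI'def : ∀ u : H, I' u = M (‖u‖ ^ 2) • (innerSL ℝ u) - Φ' u)
    (u : ℕ → H)
    (hPS1 : ∃ C : ℝ, ∀ n, |I (u n)| ≤ C)
    (hPS2 : Tendsto (fun n => ‖I' (u n)‖) atTop (nhds 0)) :
    ∃ R : ℝ, ∀ n, ‖u n‖ ≤ R := by
  obtain ⟨C, hC⟩ := hPS1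
  obtain ⟨D, hD⟩ := hPS2.bddAbove_range
  have hD' : ∀ n, ‖I' (u n)‖ ≤ D := fun n => hD ⟨n, rfl⟩
  have hD0 : 0 ≤ D := le_trans (norm_nonneg _) (hD' 0)
  have hC0 : 0 ≤ C := le_trans (abs_nonneg _) (hC 0)
  have hθ4 : (4:ℝ) < θ := hθ.1
  have hθpos : (0:ℝ) < θ := by linarith
  have hcoef : 0 < 1/4 - 1/θ := by
    have : 1/θ < 1/4 := by
      rw [div_lt_div_iff₀ hθpos (by norm_num)]; linarith
    linarith
  set a : ℝ := (1/4 - 1/θ) * m₀ with ha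
  have hapos : 0 < a := mul_pos hcoef hm₀
  refine ⟨max 1 ((C + D) / a), fun n => ?_⟩
  set v := u n with hv
  obtain ⟨t, ht⟩ : ∃ t : ℝ, ‖v‖ ^ 2 = t := ⟨_, rfl⟩
  have ht0 : 0 ≤ t := ht ▸ sq_nonneg _
  -- integrability
  have hint : IntervalIntegrable M MeasureTheory.volume 0 t := by
    apply ContinuousOn.intervalIntegrable
    apply hMc.mono
    rw [uIcc_of_le ht0]
    exact fun s hs => hs.1
  -- key integral bound
  have hMhat : M t * t / 2 ≤ ∫ s in (0:ℝ)..t, M s := by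
    rcases eq_or_lt_of_le ht0 with h0 | hpos
    · simp [← h0]
    · have hmono : ∀ s ∈ Icc (0:ℝ) t, M t / t * s ≤ M s := by
        intro s hs
        rcases eq_or_lt_of_le hs.1 with h0 | hspos
        · simp [← h0]
          exact le_trans hm₀.le (hM1 0 le_rfl)
        · have := hM3 (mem_Ioi.2 hspos) (mem_Ioi.2 hpos) hs.2
          calc M t / t * s ≤ M s / s * s :=
                mul_le_mul_of_nonneg_right this hs.1
            _ = M s := by field_simp
      have hint2 : IntervalIntegrable (fun s => M t / t * s) MeasureTheory.volume 0 t :=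
        (continuous_const.mul continuous_id).intervalIntegrable _ _
      have hle := intervalIntegral.integral_mono_on ht0 hint2 hint hmono
      have hcalc : (∫ s in (0:ℝ)..t, M t / t * s) = M t * t / 2 := by
        rw [intervalIntegral.integral_const_mul, integral_id]
        field_simp
        ring
      linarith [hle, hcalc]
  -- value of I' v at v
  have hI'v : I' v v = M t * t - Φ' v v := by
    rw [hI'def]
    simp only [ContinuousLinearMap.sub_apply, ContinuousLinearMap.smul_apply,
      innerSL_apply_apply, real_inner_self_eq_norm_sq, smul_eq_mul, ht]
  have hMt : m₀ ≤ M t := hM1 t ht0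
  have hf3 : Φ v ≤ (1/θ) * Φ' v v := by
    rw [one_div, inv_mul_eq_div, le_div_iff₀ hθpos, mul_comm]
    exact (hAR v).2
  have hf2 : 0 ≤ (1/4 - 1/θ) * ((M t - m₀) * t) :=
    mul_nonneg hcoef.le (mul_nonneg (by linarith) ht0)
  have key : (1/4 - 1/θ) * m₀ * t ≤ I v - (1/θ) * (I' v v) := by
    rw [hIdef, hI'v, ht]
    nlinarith [hMhat, hf2, hf3]
  -- bound on I' v v
  have habs : |I' v v| ≤ D * ‖v‖ := by
    calc |I' v v| = ‖I' v v‖ := (Real.norm_eq_abs _).symm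
      _ ≤ ‖I' v‖ * ‖v‖ := (I' v).le_opNorm v
      _ ≤ D * ‖v‖ := mul_le_mul_of_nonneg_right (hD' n) (norm_nonneg _)
  have hbound : a * t ≤ C + D * ‖v‖ := by
    have h1 : I v ≤ |I v| := le_abs_self _
    have h2 : (1/θ) * (-(I' v v)) ≤ (1/θ) * |I' v v| :=
      mul_le_mul_of_nonneg_left (neg_le_abs _) (by positivity)
    have h3 : (1/θ) * |I' v v| ≤ |I' v v| := by
      nlinarith [abs_nonneg (I' v v)]
    have hIc := hC n
    rw [ha]
    linarith [key, habs]
  -- conclude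
  rcases le_or_gt ‖v‖ 1 with h | h
  · exact le_trans h (le_max_left _ _)
  · refine le_trans ?_ (le_max_right _ _)
    rw [le_div_iff₀ hapos]
    rw [← ht] at hbound
    nlinarith [hbound, h, hC0, hapos]
end

section
/- Let g : (0,∞) → (0,∞) be continuous with g(t) ≥ m₀ > 0 and t ↦ g(t)/t decreasing, and let φ : (0,∞) → [0,∞) be continuous and nondecreasing with φ(t) → 0 as t → 0⁺ and φ(t) → ∞ as t → ∞, φ strictly increasing where positive. Then the equation g(t²) = t²·φ(t) has a unique positive solution t₀ (abstract version of the unique Nehari projection: uniqueness of t_u with h_u'(t_u) = 0). -/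
/-!
At a positive solution `t` the equation reads `g (t²) / t² = φ t`, and then `φ t > 0` since
`g > 0`. On the set where `φ > 0` the left side is antitone in `t` and `φ` is strictly monotone,
so they meet at most once. A solution exists by the intermediate value theorem: near `0⁺` we have
`t² φ t → 0 < m₀ ≤ g (t²)`, while for `t ≥ 1` the monotonicity of `g s / s` gives
`g (t²) ≤ t² g 1 < t² φ t` once `φ t > g 1`.
-/

open Set Filter Topology

theorem Set.subsingleton_setOf_eq_of_antitoneOn_of_strictMonoOn {α β : Type*} [LinearOrder α]
    [Preorder β] {s : Set α} {f φ : α → β} (hf : AntitoneOn f s) (hφ : StrictMonoOn φ s) :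
    {t | t ∈ s ∧ f t = φ t}.Subsingleton := by
  have not_lt_of_mem : ∀ u ∈ {t | t ∈ s ∧ f t = φ t}, ∀ v ∈ {t | t ∈ s ∧ f t = φ t}, ¬u < v := by
    rintro u ⟨hu, hfu⟩ v ⟨hv, hfv⟩ huv
    refine (hφ hu hv huv).not_ge ?_
    calc φ v = f v := hfv.symm
      _ ≤ f u := hf hu hv huv.le
      _ = φ u := hfu
  exact fun u hu v hv =>
    le_antisymm (not_lt.1 (not_lt_of_mem v hv u hu)) (not_lt.1 (not_lt_of_mem u hu v hv))

theorem antitoneOn_comp_sq_of_antitoneOn_div {g : ℝ → ℝ}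
    (hg : AntitoneOn (fun s => g s / s) (Ioi 0)) :
    AntitoneOn (fun t => g (t ^ 2) / t ^ 2) (Ioi 0) :=
  fun _ ha _ hb hab => hg (mem_Ioi.2 (pow_pos ha 2)) (mem_Ioi.2 (pow_pos hb 2))
    (pow_le_pow_left₀ (le_of_lt ha) hab 2)

theorem le_mul_of_antitoneOn_div {g : ℝ → ℝ} (hg : AntitoneOn (fun s => g s / s) (Ioi 0))
    {s : ℝ} (hs : 1 ≤ s) : g s ≤ s * g 1 := by
  have h := hg (zero_lt_one' ℝ) (zero_lt_one.trans_le hs) hs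
  simp only [div_one] at h
  rwa [div_le_iff₀' (zero_lt_one.trans_le hs)] at h

theorem subsingleton_setOf_sq_mul_eq {g φ : ℝ → ℝ} (hgpos : ∀ t, 0 < t → 0 < g t)
    (hgdec : AntitoneOn (fun t => g t / t) (Ioi 0))
    (hφstrict : StrictMonoOn φ {t : ℝ | 0 < t ∧ 0 < φ t}) :
    {t : ℝ | 0 < t ∧ g (t ^ 2) = t ^ 2 * φ t}.Subsingleton := by
  refine (Set.subsingleton_setOf_eq_of_antitoneOn_of_strictMonoOn
    ((antitoneOn_comp_sq_of_antitoneOn_div hgdec).mono fun t ht => ht.1) hφstrict).anti ?_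
  rintro t ⟨ht, heq⟩
  have ht2 : 0 < t ^ 2 := pow_pos ht 2
  have hφt : 0 < φ t := pos_of_mul_pos_right (heq ▸ hgpos _ ht2) ht2.le
  exact ⟨⟨ht, hφt⟩, by rw [heq, mul_div_cancel_left₀ _ ht2.ne']⟩

theorem exists_pos_sq_mul_eq {g φ : ℝ → ℝ} {m₀ : ℝ} (hm₀ : 0 < m₀)
    (hgc : ContinuousOn g (Ioi 0)) (hglb : ∀ t, 0 < t → m₀ ≤ g t)
    (hgdec : AntitoneOn (fun t => g t / t) (Ioi 0)) (hφc : ContinuousOn φ (Ioi 0))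
    (hφlim0 : Tendsto φ (𝓝[>] 0) (𝓝 0)) (hφliminf : Tendsto φ atTop atTop) :
    ∃ t, 0 < t ∧ g (t ^ 2) = t ^ 2 * φ t := by
  have hsq : MapsTo (fun t : ℝ => t ^ 2) (Ioi 0) (Ioi 0) := fun t ht => mem_Ioi.2 (pow_pos ht 2)
  have hlhs : ContinuousOn (fun t => g (t ^ 2)) (Ioi 0) :=
    hgc.comp (continuous_pow 2).continuousOn hsq
  have hrhs : ContinuousOn (fun t => t ^ 2 * φ t) (Ioi 0) :=
    (continuous_pow 2).continuousOn.mul hφc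
  have hsmall : (fun t => t ^ 2 * φ t) ≤ᶠ[𝓝[>] 0] fun t => g (t ^ 2) := by
    have hlim : Tendsto (fun t => t ^ 2 * φ t) (𝓝[>] 0) (𝓝 0) := by
      simpa using ((continuous_pow 2).tendsto' (0 : ℝ) 0 (by simp)).mono_left
        nhdsWithin_le_nhds |>.mul hφlim0
    filter_upwards [hlim.eventually (gt_mem_nhds hm₀), self_mem_nhdsWithin] with t hlt ht
    exact hlt.le.trans (hglb _ (pow_pos ht 2))
  have hlarge : (fun t => g (t ^ 2)) ≤ᶠ[atTop] fun t => t ^ 2 * φ t := by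
    filter_upwards [hφliminf.eventually_ge_atTop (g 1), eventually_ge_atTop 1] with t hφt ht
    calc g (t ^ 2) ≤ t ^ 2 * g 1 := le_mul_of_antitoneOn_div hgdec (one_le_pow₀ ht)
      _ ≤ t ^ 2 * φ t := by gcongr
  obtain ⟨t, ht, heq⟩ := isPreconnected_Ioi.intermediate_value₂_eventually₂
    (le_principal_iff.2 self_mem_nhdsWithin) (le_principal_iff.2 (Ioi_mem_atTop 0))
    hrhs hlhs hsmall hlarge
  exact ⟨t, ht, heq.symm⟩

theorem stmt12_general (g φ : ℝ → ℝ) (m₀ : ℝ) (hm₀ : 0 < m₀)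
    (hgc : ContinuousOn g (Ioi 0))
    (hglb : ∀ t, 0 < t → m₀ ≤ g t)
    (hgdec : AntitoneOn (fun t => g t / t) (Ioi 0))
    (hφc : ContinuousOn φ (Ioi 0))
    (hφstrict : StrictMonoOn φ {t : ℝ | 0 < t ∧ 0 < φ t})
    (hφlim0 : Tendsto φ (nhdsWithin 0 (Ioi 0)) (nhds 0))
    (hφliminf : Tendsto φ atTop atTop) :
    ∃! t₀ : ℝ, 0 < t₀ ∧ g (t₀ ^ 2) = t₀ ^ 2 * φ t₀ := by
  obtain ⟨t₀, ht₀⟩ := exists_pos_sq_mul_eq hm₀ hgc hglb hgdec hφc hφlim0 hφliminf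
  have hunique :=
    subsingleton_setOf_sq_mul_eq (fun t ht => hm₀.trans_le (hglb t ht)) hgdec hφstrict
  exact ⟨t₀, ht₀, fun _ ht => hunique ht ht₀⟩

/-- Abstract fibering lemma (unique Nehari projection): if `g : (0,∞) → (0,∞)` is
continuous with `g ≥ m₀ > 0` and `t ↦ g t / t` decreasing on `(0,∞)`, and
`φ : (0,∞) → [0,∞)` is continuous, nondecreasing, strictly increasing where it is
positive, with `φ(t) → 0` as `t → 0⁺` and `φ(t) → ∞` as `t → ∞`, then the equation
`g(t²) = t² φ(t)` has a unique positive solution `t₀`. -/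
theorem stmt12 (g φ : ℝ → ℝ) (m₀ : ℝ) (hm₀ : 0 < m₀)
    (hgc : ContinuousOn g (Ioi 0))
    (hglb : ∀ t, 0 < t → m₀ ≤ g t)
    (hgdec : AntitoneOn (fun t => g t / t) (Ioi 0))
    (hφc : ContinuousOn φ (Ioi 0))
    (hφ0 : ∀ t, 0 < t → 0 ≤ φ t)
    (hφmono : MonotoneOn φ (Ioi 0))
    (hφstrict : StrictMonoOn φ {t : ℝ | 0 < t ∧ 0 < φ t})
    (hφlim0 : Tendsto φ (nhdsWithin 0 (Ioi 0)) (nhds 0))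
    (hφliminf : Tendsto φ atTop atTop) :
    ∃! t₀ : ℝ, 0 < t₀ ∧ g (t₀ ^ 2) = t₀ ^ 2 * φ t₀ :=
  stmt12_general g φ m₀ hm₀ hgc hglb hgdec hφc hφstrict hφlim0 hφliminf
end
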